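/- For every pair of infinite-dimensional real Banach spaces Y and X, one has K(Y) · J_s(X) ≤ 2 · e_1^s(Y, X). -/

import Mathlib

/-! If `(y n)` lies in the unit ball of `Y` with `‖y n - y m‖ ≥ c > 0` for `n ≠ m`, and `(a n)` is
dense in `A ⊆ X`, then `y n ↦ a n` is `(δ(A) / c)`-Lipschitz. Extending it to the point `0` with
constant `λ δ(A) / c` produces `b` with `‖a n - b‖ ≤ λ δ(A) / c` for all `n`, hence
`r(A) ≤ λ δ(A) / c`, i.e. `c · 2 r(A) / δ(A) ≤ 2 λ`. The admissible `λ` form a nonempty set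
(`λ = 3` always works when `X` is complete), so the bound passes to the infimum over `λ` and to
the suprema over `c` and `A`. -/

/-- The (Chebyshev) radius of a subset of a normed space:
`r(A) = inf_{b ∈ X} sup_{a ∈ A} ‖a − b‖`. -/
noncomputable def radius {X : Type} [SeminormedAddCommGroup X] (A : Set X) : ℝ :=
  ⨅ b : X, ⨆ a : A, ‖(a : X) - b‖

/-- The separable Jung constant
`J_s(X) = sup {2 r(A)/δ(A) : A closed, bounded, separable, δ(A) > 0}`. -/
noncomputable def JungS (X : Type) [SeminormedAddCommGroup X] : ℝ :=
  sSup {c : ℝ | ∃ A : Set X, IsClosed A ∧ Bornology.IsBounded A ∧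
    TopologicalSpace.IsSeparable A ∧ 0 < Metric.diam A ∧
    c = 2 * radius A / Metric.diam A}

/-- The Kottman constant: the supremum of separation constants of sequences in the
closed unit ball. -/
noncomputable def Kottman (Y : Type) [SeminormedAddCommGroup Y] : ℝ :=
  sSup {c : ℝ | ∃ y : ℕ → Y, (∀ n, ‖y n‖ ≤ 1) ∧
    c = sInf {d : ℝ | ∃ n m : ℕ, n ≠ m ∧ d = ‖y n - y m‖}}

/-- `e₁ˢ(Y, X)`: the infimum of all `l > 0` such that every Lipschitz map from a
separable subset `M ⊆ Y` into `X` extends to any one extra point with Lipschitz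
constant multiplied by at most `l`. -/
noncomputable def e1s (Y X : Type) [SeminormedAddCommGroup Y] [SeminormedAddCommGroup X] : ℝ :=
  sInf {l : ℝ | 0 < l ∧ ∀ (M : Set Y), TopologicalSpace.IsSeparable M → ∀ (p : Y)
    (f : M → X) (K : NNReal), LipschitzWith K f →
    ∃ F : ↥(insert p M : Set Y) → X, LipschitzWith (l.toNNReal * K) F ∧
      ∀ (y : Y) (hy : y ∈ M), F ⟨y, Set.mem_insert_of_mem p hy⟩ = f ⟨y, hy⟩}

open Set Metric
open scoped NNReal

lemma sSup_mul_sSup_le_of_nonneg {S T : Set ℝ} {B : ℝ} (hS : ∀ c ∈ S, 0 ≤ c)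
    (hT : ∀ j ∈ T, 0 ≤ j) (hB : 0 ≤ B) (h : ∀ c ∈ S, ∀ j ∈ T, c * j ≤ B) :
    sSup S * sSup T ≤ B := by
  rcases (Real.sSup_nonneg hS).eq_or_lt with h0 | hpos
  · rw [← h0, zero_mul]
    exact hB
  rw [← le_div_iff₀' hpos]
  refine Real.sSup_le (fun j hjT => ?_) (by positivity)
  rcases (hT j hjT).eq_or_lt with rfl | hj
  · positivity
  rw [le_div_iff₀ hpos, mul_comm, ← le_div_iff₀ hj]
  exact Real.sSup_le (fun c hc => (le_div_iff₀ hj).2 (h c hc j hjT)) (by positivity)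

lemma lipschitzWith_of_pairwise_le_dist {α β : Type*} [PseudoMetricSpace α] [PseudoMetricSpace β]
    {g : α → β} {c D : ℝ} (hc : 0 < c) (hsep : Pairwise fun x y : α => c ≤ dist x y)
    (hD : ∀ x y, dist (g x) (g y) ≤ D) : LipschitzWith (D / c).toNNReal g :=
  LipschitzWith.of_dist_le_mul fun x y => by
    rcases eq_or_ne x y with rfl | hxy
    · simp
    have hD0 : 0 ≤ D := dist_nonneg.trans (hD x y)
    rw [Real.coe_toNNReal _ (by positivity)]
    calc dist (g x) (g y) ≤ D := hD x y
      _ = D / c * c := by field_simp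
      _ ≤ D / c * dist x y := by gcongr; exact hsep hxy

section OnePointExtension

variable {α β : Type*} [PseudoMetricSpace α] [MetricSpace β] [CompleteSpace β]

lemma LipschitzWith.exists_dist_le_mul_dist_of_mem_closure {M : Set α} {f : M → β} {K : ℝ≥0}
    (hf : LipschitzWith K f) {p : α} (hp : p ∈ closure M) :
    ∃ b : β, ∀ m : M, dist b (f m) ≤ K * dist p m := by
  let s : Set (closure M) := Subtype.val ⁻¹' M
  have hs : Dense s := by
    rw [Subtype.dense_iff, Subtype.image_preimage_coe, inter_eq_right.2 subset_closure]
  let f' : s → β := fun x => f ⟨x.1.1, x.2⟩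
  have hf' : LipschitzWith K f' := LipschitzWith.of_dist_le_mul fun x y => hf.dist_le_mul _ _
  have hg := hs.lipschitzWith_extend hf'
  refine ⟨hs.extend f' ⟨p, hp⟩, fun m => ?_⟩
  have hm : hs.extend f' ⟨m, subset_closure m.2⟩ = f m := hs.extend_eq hf'.continuous ⟨_, m.2⟩
  rw [← hm]
  exact hg.dist_le_mul _ _

lemma LipschitzWith.exists_dist_le_three_mul_dist [Nonempty β] {M : Set α} {f : M → β}
    {K : ℝ≥0} (hf : LipschitzWith K f) (p : α) :
    ∃ b : β, ∀ m : M, dist b (f m) ≤ 3 * K * dist p m := by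
  by_cases hp : p ∈ closure M
  · obtain ⟨b, hb⟩ := hf.exists_dist_le_mul_dist_of_mem_closure hp
    exact ⟨b, fun m => (hb m).trans <| by gcongr; linarith [K.coe_nonneg]⟩
  rcases M.eq_empty_or_nonempty with rfl | hM
  · exact ⟨Classical.arbitrary β, fun m => absurd m.2 (notMem_empty _)⟩
  -- Away from `closure M`, a point of `M` almost nearest to `p` will do.
  have hd : 0 < infDist p M := (infDist_pos_iff_notMem_closure hM).1 hp
  obtain ⟨m₀, hm₀, hpm₀⟩ := (infDist_lt_iff hM).1 (by linarith : infDist p M < 2 * infDist p M)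
  refine ⟨f ⟨m₀, hm₀⟩, fun m => ?_⟩
  have hpm : infDist p M ≤ dist p m := infDist_le_dist_of_mem m.2
  calc dist (f ⟨m₀, hm₀⟩) (f m) ≤ K * dist m₀ m := hf.dist_le_mul _ _
    _ ≤ K * (dist p m₀ + dist p m) := by gcongr; exact dist_triangle_left _ _ _
    _ ≤ 3 * K * dist p m := by nlinarith [K.coe_nonneg]

lemma LipschitzWith.exists_extension_insert [Nonempty β] {M : Set α} {f : M → β} {K : ℝ≥0}
    (hf : LipschitzWith K f) (p : α) :
    ∃ F : ↥(insert p M) → β, LipschitzWith (3 * K) F ∧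
      ∀ (y : α) (hy : y ∈ M), F ⟨y, mem_insert_of_mem p hy⟩ = f ⟨y, hy⟩ := by
  classical
  obtain ⟨b, hb⟩ := hf.exists_dist_le_three_mul_dist p
  have eq_of_notMem : ∀ x : ↥(insert p M), (x : α) ∉ M → (x : α) = p := fun x hx =>
    x.2.resolve_right hx
  refine ⟨fun x => if hx : (x : α) ∈ M then f ⟨x, hx⟩ else b,
    LipschitzWith.of_dist_le_mul fun x y => ?_, fun y hy => dif_pos hy⟩
  rw [Subtype.dist_eq, NNReal.coe_mul, NNReal.coe_ofNat]
  by_cases hx : (x : α) ∈ M <;> by_cases hy : (y : α) ∈ M <;> simp only [hx, hy, dite_true,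
    dite_false]
  · exact (hf.dist_le_mul _ _).trans <| by gcongr; exacts [by linarith [K.coe_nonneg], le_rfl]
  · simpa only [dist_comm, eq_of_notMem y hy] using hb ⟨x, hx⟩
  · simpa only [eq_of_notMem x hx] using hb ⟨y, hy⟩
  · rw [dist_self]; positivity

end OnePointExtension

section Radius

variable {X : Type} [SeminormedAddCommGroup X]

lemma radius_nonneg (A : Set X) : 0 ≤ radius A :=
  le_ciInf fun _ => Real.iSup_nonneg fun _ => norm_nonneg _

lemma radius_le_of_subset_closedBall {A : Set X} {b : X} {r : ℝ} (hr : 0 ≤ r)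
    (hA : A ⊆ closedBall b r) : radius A ≤ r :=
  ciInf_le_of_le ⟨0, by rintro _ ⟨b', rfl⟩; exact Real.iSup_nonneg fun _ => norm_nonneg _⟩ b <|
    Real.iSup_le (fun a => by simpa [dist_eq_norm] using hA a.2) hr

end Radius

section Separation

variable {Y : Type} [SeminormedAddCommGroup Y]

noncomputable def separationConstant (y : ℕ → Y) : ℝ :=
  sInf {d : ℝ | ∃ n m : ℕ, n ≠ m ∧ d = ‖y n - y m‖}

lemma separationConstant_nonneg (y : ℕ → Y) : 0 ≤ separationConstant y :=
  Real.sInf_nonneg <| by rintro _ ⟨n, m, -, rfl⟩; exact norm_nonneg _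

lemma separationConstant_le_norm_sub (y : ℕ → Y) :
    Pairwise fun n m => separationConstant y ≤ ‖y n - y m‖ := fun n m hnm =>
  csInf_le ⟨0, by rintro _ ⟨n, m, -, rfl⟩; exact norm_nonneg _⟩ ⟨n, m, hnm, rfl⟩

end Separation

section OnePointExtensionConstant

variable {Y X : Type} [SeminormedAddCommGroup Y]

def HasOnePointLipschitzExtension (Y X : Type) [SeminormedAddCommGroup Y]
    [SeminormedAddCommGroup X] (l : ℝ) : Prop :=
  ∀ (M : Set Y), TopologicalSpace.IsSeparable M → ∀ (p : Y) (f : M → X) (K : NNReal),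
    LipschitzWith K f → ∃ F : ↥(insert p M : Set Y) → X, LipschitzWith (l.toNNReal * K) F ∧
      ∀ (y : Y) (hy : y ∈ M), F ⟨y, Set.mem_insert_of_mem p hy⟩ = f ⟨y, hy⟩

lemma hasOnePointLipschitzExtension_three [NormedAddCommGroup X] [CompleteSpace X] :
    HasOnePointLipschitzExtension Y X 3 := fun _ _ p _ _ hf => by
  simpa using hf.exists_extension_insert p

lemma e1s_nonneg [SeminormedAddCommGroup X] : 0 ≤ e1s Y X :=
  Real.sInf_nonneg fun _ hl => hl.1.le

lemma le_e1s [NormedAddCommGroup X] [CompleteSpace X] {t : ℝ}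
    (h : ∀ l, 0 < l → HasOnePointLipschitzExtension Y X l → t ≤ l) : t ≤ e1s Y X :=
  le_csInf ⟨3, three_pos, hasOnePointLipschitzExtension_three⟩ fun l hl => h l hl.1 hl.2

lemma HasOnePointLipschitzExtension.exists_dist_le [SeminormedAddCommGroup X] {l : ℝ}
    (hext : HasOnePointLipschitzExtension Y X l) (hl : 0 ≤ l) {M : Set Y}
    (hM : TopologicalSpace.IsSeparable M) {f : M → X} {K : ℝ≥0} (hf : LipschitzWith K f)
    (p : Y) : ∃ b : X, ∀ m : M, dist (f m) b ≤ l * K * dist (m : Y) p := by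
  obtain ⟨F, hF, hFf⟩ := hext M hM p f K hf
  refine ⟨F ⟨p, mem_insert p M⟩, fun m => ?_⟩
  rw [← hFf m m.2, ← Real.coe_toNNReal l hl]
  exact hF.dist_le_mul _ _

lemma radius_le_of_pairwise_le_norm_sub [SeminormedAddCommGroup X] {l c : ℝ}
    (hext : HasOnePointLipschitzExtension Y X l) (hl : 0 ≤ l) {y : ℕ → Y} (hy : ∀ n, ‖y n‖ ≤ 1)
    (hc : 0 < c) (hsep : Pairwise fun n m => c ≤ ‖y n - y m‖) {A : Set X}
    (hA : Bornology.IsBounded A) (hAs : TopologicalSpace.IsSeparable A) (hAne : A.Nonempty) :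
    radius A ≤ l * (diam A / c) := by
  obtain ⟨t, htA, htc, hAt⟩ := hAs.exists_countable_dense_subset
  obtain ⟨a, rfl⟩ := htc.exists_eq_range (closure_nonempty_iff.1 (hAne.mono hAt))
  have hinj : Function.Injective y := fun n m hnm => by
    by_contra hne
    have : c ≤ ‖y n - y m‖ := hsep hne
    rw [hnm, sub_self, norm_zero] at this
    linarith
  let e := Equiv.ofInjective y hinj
  have he : ∀ x, y (e.symm x) = x := Equiv.apply_ofInjective_symm hinj
  have hf : LipschitzWith (diam A / c).toNNReal (a ∘ e.symm) := by
    refine lipschitzWith_of_pairwise_le_dist hc (fun x z hxz => ?_)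
      fun x z => dist_le_diam_of_mem hA (htA (mem_range_self _)) (htA (mem_range_self _))
    simpa only [he, Subtype.dist_eq, dist_eq_norm]
      using hsep (e.symm.injective.ne hxz)
  obtain ⟨b, hb⟩ := hext.exists_dist_le hl (countable_range y).isSeparable hf 0
  have hab : range a ⊆ closedBall b (l * (diam A / c)) := by
    rintro _ ⟨n, rfl⟩
    have hbn := hb (e n)
    rw [Function.comp_apply, e.symm_apply_apply, Equiv.ofInjective_apply, dist_zero_right,
      Real.coe_toNNReal _ (by positivity)] at hbn
    exact hbn.trans (mul_le_of_le_one_right (by positivity) (hy n))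
  exact radius_le_of_subset_closedBall (by positivity)
    (hAt.trans (closure_minimal hab isClosed_closedBall))

lemma separationConstant_mul_le_two_mul_e1s [NormedAddCommGroup X] [CompleteSpace X]
    {y : ℕ → Y} (hy : ∀ n, ‖y n‖ ≤ 1) {A : Set X} (hA : Bornology.IsBounded A)
    (hAs : TopologicalSpace.IsSeparable A) (hAd : 0 < diam A) :
    separationConstant y * (2 * radius A / diam A) ≤ 2 * e1s Y X := by
  rcases (separationConstant_nonneg y).eq_or_lt with h0 | hc
  · rw [← h0, zero_mul]
    linarith [e1s_nonneg (Y := Y) (X := X)]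
  set c := separationConstant y
  have hAne : A.Nonempty := nonempty_iff_ne_empty.2 fun h => by simp [h] at hAd
  suffices c * radius A / diam A ≤ e1s Y X by
    rw [mul_div_assoc', mul_left_comm, mul_div_assoc]
    linarith
  refine le_e1s fun l hl hext => ?_
  have hr := radius_le_of_pairwise_le_norm_sub hext hl.le hy hc
    (separationConstant_le_norm_sub y) hA hAs hAne
  calc c * radius A / diam A ≤ c * (l * (diam A / c)) / diam A := by gcongr
    _ = l := by field_simp

end OnePointExtensionConstant

theorem kottman_mul_jungS_le_two_mul_e1s_general
    (Y X : Type) [NormedAddCommGroup Y]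
    [NormedAddCommGroup X] [CompleteSpace X] :
    Kottman Y * JungS X ≤ 2 * e1s Y X := by
  refine sSup_mul_sSup_le_of_nonneg ?_ ?_ (by linarith [e1s_nonneg (Y := Y) (X := X)]) ?_
  · rintro _ ⟨y, -, rfl⟩
    exact separationConstant_nonneg y
  · rintro _ ⟨A, -, -, -, -, rfl⟩
    have := radius_nonneg A
    positivity
  · rintro _ ⟨y, hy, rfl⟩ _ ⟨A, -, hA, hAs, hAd, rfl⟩
    exact separationConstant_mul_le_two_mul_e1s hy hA hAs hAd

/-- For infinite-dimensional Banach spaces `Y, X`: `K(Y)·J_s(X) ≤ 2·e₁ˢ(Y, X)`. -/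
theorem kottman_mul_jungS_le_two_mul_e1s
    (Y X : Type) [NormedAddCommGroup Y] [NormedSpace ℝ Y] [CompleteSpace Y]
    [NormedAddCommGroup X] [NormedSpace ℝ X] [CompleteSpace X]
    (hY : ¬ FiniteDimensional ℝ Y) (hX : ¬ FiniteDimensional ℝ X) :
    Kottman Y * JungS X ≤ 2 * e1s Y X :=
  kottman_mul_jungS_le_two_mul_e1s_general Y X
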